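/- arXiv:1207.4822 — 3 statements merged into one kernel-verified Lean document; each statement's English description precedes it below -/
import Mathlib

section
/- Let p be an odd prime, n ≥ 2, and let r ∈ ℤ^{n+1} be primitive with Q_p(r) > 0 and satisfying the crystallographic condition. Then Q_p(r) ∈ {1, 2, p, 2p}. -/
/-- The bilinear form `B_p(x,y) = -p·x_0·y_0 + x_1·y_1 + … + x_n·y_n` on `ℤ^{n+1}`. -/
def Bform (p : ℤ) {n : ℕ} (x y : Fin (n + 1) → ℤ) : ℤ :=
  -p * x 0 * y 0 + ∑ i ∈ Finset.univ.filter (fun i : Fin (n + 1) => i ≠ 0), x i * y i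

/-- The quadratic form `Q_p(x) = B_p(x,x)`. -/
def Qform (p : ℤ) {n : ℕ} (x : Fin (n + 1) → ℤ) : ℤ := Bform p x x

/-!
Multiplying the crystallographic conditions by `p` shows that `Q_p(r)` divides `2p·rᵢ` for every
coordinate `i`; since `r` is primitive, `Q_p(r)` divides `2p`, and the positive divisors of `2p`
are `1, 2, p, 2p`.
-/

theorem Finset.dvd_of_forall_dvd_mul_of_gcd_eq_one {ι α : Type*} [CommMonoidWithZero α]
    [NormalizedGCDMonoid α] {s : Finset ι} {f : ι → α} {a c : α} (hs : s.gcd f = 1)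
    (h : ∀ i ∈ s, a ∣ c * f i) : a ∣ c := by
  simpa only [hs, mul_one] using (Finset.dvd_gcd h).trans (Finset.gcd_mul_left' s f c).dvd

theorem Nat.eq_one_or_two_or_self_or_two_mul_of_dvd_two_mul {p k : ℕ} (hp : p.Prime)
    (hk : k ∣ 2 * p) : k = 1 ∨ k = 2 ∨ k = p ∨ k = 2 * p := by
  obtain ⟨a, b, ha, hb, rfl⟩ := Nat.dvd_mul.mp hk
  rcases (Nat.dvd_prime Nat.prime_two).mp ha with rfl | rfl <;>
    rcases (Nat.dvd_prime hp).mp hb with rfl | rfl <;> simp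

theorem Int.eq_one_or_two_or_self_or_two_mul_of_dvd_two_mul {p : ℕ} {q : ℤ} (hp : p.Prime)
    (hq : 0 < q) (hdvd : q ∣ 2 * p) : q = 1 ∨ q = 2 ∨ q = p ∨ q = 2 * p := by
  lift q to ℕ using hq.le
  exact_mod_cast Nat.eq_one_or_two_or_self_or_two_mul_of_dvd_two_mul hp (by exact_mod_cast hdvd)

theorem dvd_two_mul_mul_of_crystallographic {p q : ℤ} {n : ℕ} {r : Fin (n + 1) → ℤ}
    (hcrys : (∀ i : Fin (n + 1), i ≠ 0 → q ∣ 2 * r i) ∧ q ∣ 2 * p * r 0) (i : Fin (n + 1)) :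
    q ∣ 2 * p * r i := by
  rcases eq_or_ne i 0 with rfl | hi
  · exact hcrys.2
  · rw [mul_right_comm]
    exact (hcrys.1 i hi).mul_right p

theorem stmt1_general (p : ℕ) (hp : p.Prime) (n : ℕ)
    (r : Fin (n + 1) → ℤ)
    (hprim : Finset.univ.gcd r = 1)
    (hpos : 0 < Qform (p : ℤ) r)
    (hcrys : (∀ i : Fin (n + 1), i ≠ 0 → Qform (p : ℤ) r ∣ 2 * r i) ∧
      Qform (p : ℤ) r ∣ 2 * (p : ℤ) * r 0) :
    Qform (p : ℤ) r = 1 ∨ Qform (p : ℤ) r = 2 ∨ Qform (p : ℤ) r = (p : ℤ) ∨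
      Qform (p : ℤ) r = 2 * (p : ℤ) := by
  have hdvd : Qform (p : ℤ) r ∣ 2 * p :=
    Finset.dvd_of_forall_dvd_mul_of_gcd_eq_one hprim fun i _ =>
      dvd_two_mul_mul_of_crystallographic hcrys i
  exact Int.eq_one_or_two_or_self_or_two_mul_of_dvd_two_mul hp hpos hdvd

theorem stmt1 (p : ℕ) (hp : p.Prime) (hodd : Odd p) (n : ℕ) (hn : 2 ≤ n)
    (r : Fin (n + 1) → ℤ)
    (hprim : Finset.univ.gcd r = 1)
    (hpos : 0 < Qform (p : ℤ) r)
    (hcrys : (∀ i : Fin (n + 1), i ≠ 0 → Qform (p : ℤ) r ∣ 2 * r i) ∧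
      Qform (p : ℤ) r ∣ 2 * (p : ℤ) * r 0) :
    Qform (p : ℤ) r = 1 ∨ Qform (p : ℤ) r = 2 ∨ Qform (p : ℤ) r = (p : ℤ) ∨
      Qform (p : ℤ) r = 2 * (p : ℤ) :=
  stmt1_general p hp n r hprim hpos hcrys
end

section
/- Let e = (2,3,2,1,1,1,1,1,1,1) ∈ ℤ^{10}, so that Q_5(e) = 0, and let M = {x ∈ ℤ^{10} : B_5(x, e) = 0}. Then the subgroup of M generated by e together with all roots of M (i.e., all r ∈ M with Q_5(r) > 0 such that Q_5(r) divides 2·B_5(r, x) for every x ∈ M) is a proper subgroup of M. -/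
set_option maxHeartbeats 1600000


/-- The primitive null vector `e`. -/
def eVec : Fin 10 → ℤ := ![2, 3, 2, 1, 1, 1, 1, 1, 1, 1]

lemma Bform_apply (x y : Fin 10 → ℤ) :
    Bform 5 x y = -5 * x 0 * y 0 + (x 1*y 1 + x 2*y 2 + x 3*y 3 + x 4*y 4 + x 5*y 5
      + x 6*y 6 + x 7*y 7 + x 8*y 8 + x 9*y 9) := by
  show Bform 5 (n := 9) x y = _
  rw [Bform, Finset.sum_filter]
  simp [Fin.sum_univ_succ,
    show Fin.succ (2 : Fin 9) = (3 : Fin 10) from rfl,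
    show ((2 : Fin 8).succ).succ = (4 : Fin 10) from rfl,
    show (((2 : Fin 7).succ).succ).succ = (5 : Fin 10) from rfl,
    show ((((2 : Fin 6).succ).succ).succ).succ = (6 : Fin 10) from rfl,
    show (((((2 : Fin 5).succ).succ).succ).succ).succ = (7 : Fin 10) from rfl,
    show ((((((2 : Fin 4).succ).succ).succ).succ).succ).succ = (8 : Fin 10) from rfl,
    show (((((((2 : Fin 3).succ).succ).succ).succ).succ).succ).succ = (9 : Fin 10) from rfl]
  ring

lemma intstep (x : ℤ) : 0 ≤ x * (x - 1) := by
  rcases le_or_gt x 0 with h | h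
  · exact mul_nonneg_iff.mpr (Or.inr ⟨h, by omega⟩)
  · exact mul_nonneg (by omega) (by omega)

lemma w3_le (x : ℤ) : 3*x ≤ x^2 + 2 := by
  have e : (x-1)*((x-1)-1) = x^2 - 3*x + 2 := by ring
  linarith [intstep (x-1), e]
lemma w3_ge (x : ℤ) : -(x^2 + 2) ≤ 3*x := by
  have e : (x+2)*((x+2)-1) = x^2 + 3*x + 2 := by ring
  linarith [intstep (x+2), e]
lemma w2_le (x : ℤ) : 2*x ≤ x^2 + 1 := by
  have e : (x-1)^2 = x^2 - 2*x + 1 := by ring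
  linarith [sq_nonneg (x-1), e]
lemma w2_ge (x : ℤ) : -(x^2 + 1) ≤ 2*x := by
  have e : (x+1)^2 = x^2 + 2*x + 1 := by ring
  linarith [sq_nonneg (x+1), e]
lemma w1_le (x : ℤ) : x ≤ x^2 := by
  have e : x*(x-1) = x^2 - x := by ring
  linarith [intstep x, e]
lemma w1_ge (x : ℤ) : -(x^2) ≤ x := by
  have e : (x+1)*((x+1)-1) = x^2 + x := by ring
  linarith [intstep (x+1), e]

lemma evensq (x : ℤ) : ∃ k, x^2 - x = 2*k := by
  rcases Int.even_or_odd x with ⟨m, hm⟩ | ⟨m, hm⟩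
  · exact ⟨2*m^2 - m, by rw [hm]; ring⟩
  · exact ⟨2*m^2 + m, by rw [hm]; ring⟩

lemma odd_dvd {q B : ℤ} (hodd : ¬ ((2:ℤ) ∣ q)) (h : q ∣ 2*B) : q ∣ B := by
  obtain ⟨k, hk⟩ := h
  rcases Int.even_or_odd k with ⟨m, hm⟩ | ⟨m, hm⟩
  · have h2 : 2*B = 2*(q*m) := by linear_combination hk + q*hm
    exact ⟨m, by linarith⟩
  · exact absurd ⟨B - q*m, by linear_combination -hk - q*hm⟩ hodd

lemma lemA (a0 a1 a2 a3 a5 a6 a7 a8 a9 : ℤ)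
    (h1 : -10*a0 + 3*a1 + 2*a2 + a3 + a5 + a6 + a7 + a8 + a9 = 0)
    (h2 : -5*a0^2 + (a1^2 + a2^2 + a3^2 + a5^2 + a6^2 + a7^2 + a8^2 + a9^2) = 1) : False := by
  have hW : 3*a1 + 2*a2 + a3 + a5 + a6 + a7 + a8 + a9 = 10*a0 := by linarith
  have lag : (3*a1 + 2*a2 + a3 + a5 + a6 + a7 + a8 + a9)^2 + ((3*a2 - 2*a1)^2 + (3*a3 - a1)^2 + (3*a5 - a1)^2 + (3*a6 - a1)^2 + (3*a7 - a1)^2 + (3*a8 - a1)^2 + (3*a9 - a1)^2 + (2*a3 - a2)^2 + (2*a5 - a2)^2 + (2*a6 - a2)^2 + (2*a7 - a2)^2 + (2*a8 - a2)^2 + (2*a9 - a2)^2 + (a5 - a3)^2 + (a6 - a3)^2 + (a7 - a3)^2 + (a8 - a3)^2 + (a9 - a3)^2 + (a6 - a5)^2 + (a7 - a5)^2 + (a8 - a5)^2 + (a9 - a5)^2 + (a7 - a6)^2 + (a8 - a6)^2 + (a9 - a6)^2 + (a8 - a7)^2 + (a9 - a7)^2 + (a9 - a8)^2) = 19*(a1^2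 + a2^2 + a3^2 + a5^2 + a6^2 + a7^2 + a8^2 + a9^2) := by ring
  rw [hW] at lag
  have hsq : (0:ℤ) ≤ (3*a2 - 2*a1)^2 + (3*a3 - a1)^2 + (3*a5 - a1)^2 + (3*a6 - a1)^2 + (3*a7 - a1)^2 + (3*a8 - a1)^2 + (3*a9 - a1)^2 + (2*a3 - a2)^2 + (2*a5 - a2)^2 + (2*a6 - a2)^2 + (2*a7 - a2)^2 + (2*a8 - a2)^2 + (2*a9 - a2)^2 + (a5 - a3)^2 + (a6 - a3)^2 + (a7 - a3)^2 + (a8 - a3)^2 + (a9 - a3)^2 + (a6 - a5)^2 + (a7 - a5)^2 + (a8 - a5)^2 + (a9 - a5)^2 + (a7 - a6)^2 + (a8 - a6)^2 + (a9 - a6)^2 + (a8 - a7)^2 + (a9 - a7)^2 + (a9 - a8)^2 := by positivity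
  have e1 : 5*a0^2 = 19 - ((3*a2 - 2*a1)^2 + (3*a3 - a1)^2 + (3*a5 - a1)^2 + (3*a6 - a1)^2 + (3*a7 - a1)^2 + (3*a8 - a1)^2 + (3*a9 - a1)^2 + (2*a3 - a2)^2 + (2*a5 - a2)^2 + (2*a6 - a2)^2 + (2*a7 - a2)^2 + (2*a8 - a2)^2 + (2*a9 - a2)^2 + (a5 - a3)^2 + (a6 - a3)^2 + (a7 - a3)^2 + (a8 - a3)^2 + (a9 - a3)^2 + (a6 - a5)^2 + (a7 - a5)^2 + (a8 - a5)^2 + (a9 - a5)^2 + (a7 - a6)^2 + (a8 - a6)^2 + (a9 - a6)^2 + (a8 - a7)^2 + (a9 - a7)^2 + (a9 - a8)^2) := by linear_combination lag + 19*h2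
  have hb : 5*a0^2 ≤ 19 := by rw [e1]; exact sub_le_self 19 hsq
  clear lag hsq hW e1
  have ep1 : 5*((a0-1)*((a0-1)-1)) = 5*a0^2 - 15*a0 + 10 := by ring
  have hb1 : 15*a0 ≤ 29 := by linarith [intstep (a0-1), ep1]
  have ep2 : 5*((a0+2)*((a0+2)-1)) = 5*a0^2 + 15*a0 + 10 := by ring
  have hb2 : -29 ≤ 15*a0 := by linarith [intstep (a0+2), ep2]
  clear ep1 ep2
  have hcase : a0 = -1 ∨ a0 = 0 ∨ a0 = 1 := by omega
  rcases hcase with h | h | h <;> subst h <;> norm_num at h1 h2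
  · linarith [w3_ge a1, w2_ge a2, w1_ge a3, w1_ge a5, w1_ge a6, w1_ge a7, w1_ge a8, w1_ge a9]
  · obtain ⟨k1, hk1⟩ := evensq a1
    obtain ⟨k2, hk2⟩ := evensq a2
    obtain ⟨k3, hk3⟩ := evensq a3
    obtain ⟨k5, hk5⟩ := evensq a5
    obtain ⟨k6, hk6⟩ := evensq a6
    obtain ⟨k7, hk7⟩ := evensq a7
    obtain ⟨k8, hk8⟩ := evensq a8
    obtain ⟨k9, hk9⟩ := evensq a9
    have hodd2 : a2 = 2*(k1+k2+k3+k5+k6+k7+k8+k9 - a1) - 1 := by linarith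
    have h2sq : 1 ≤ a2^2 := by
      rw [hodd2]
      have ep : (2*(k1+k2+k3+k5+k6+k7+k8+k9 - a1) - 1)^2 = 4*((k1+k2+k3+k5+k6+k7+k8+k9 - a1)*((k1+k2+k3+k5+k6+k7+k8+k9 - a1)-1)) + 1 := by ring
      linarith [intstep (k1+k2+k3+k5+k6+k7+k8+k9 - a1), ep]
    have s1 : a1^2 = 0 := le_antisymm (by linarith [sq_nonneg a3, sq_nonneg a5, sq_nonneg a6, sq_nonneg a7, sq_nonneg a8, sq_nonneg a9]) (sq_nonneg a1)
    have s3 : a3^2 = 0 := le_antisymm (by linarith [sq_nonneg a1, sq_nonneg a5, sq_nonneg a6, sq_nonneg a7, sq_nonneg a8, sq_nonneg a9]) (sq_nonneg a3)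
    have s5 : a5^2 = 0 := le_antisymm (by linarith [sq_nonneg a1, sq_nonneg a3, sq_nonneg a6, sq_nonneg a7, sq_nonneg a8, sq_nonneg a9]) (sq_nonneg a5)
    have s6 : a6^2 = 0 := le_antisymm (by linarith [sq_nonneg a1, sq_nonneg a3, sq_nonneg a5, sq_nonneg a7, sq_nonneg a8, sq_nonneg a9]) (sq_nonneg a6)
    have s7 : a7^2 = 0 := le_antisymm (by linarith [sq_nonneg a1, sq_nonneg a3, sq_nonneg a5, sq_nonneg a6, sq_nonneg a8, sq_nonneg a9]) (sq_nonneg a7)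
    have s8 : a8^2 = 0 := le_antisymm (by linarith [sq_nonneg a1, sq_nonneg a3, sq_nonneg a5, sq_nonneg a6, sq_nonneg a7, sq_nonneg a9]) (sq_nonneg a8)
    have s9 : a9^2 = 0 := le_antisymm (by linarith [sq_nonneg a1, sq_nonneg a3, sq_nonneg a5, sq_nonneg a6, sq_nonneg a7, sq_nonneg a8]) (sq_nonneg a9)
    have z1 : a1 = 0 := pow_eq_zero_iff (two_ne_zero) |>.mp s1
    have z3 : a3 = 0 := pow_eq_zero_iff (two_ne_zero) |>.mp s3
    have z5 : a5 = 0 := pow_eq_zero_iff (two_ne_zero) |>.mp s5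
    have z6 : a6 = 0 := pow_eq_zero_iff (two_ne_zero) |>.mp s6
    have z7 : a7 = 0 := pow_eq_zero_iff (two_ne_zero) |>.mp s7
    have z8 : a8 = 0 := pow_eq_zero_iff (two_ne_zero) |>.mp s8
    have z9 : a9 = 0 := pow_eq_zero_iff (two_ne_zero) |>.mp s9
    have hfin : 2*a2 = 0 := by linarith
    omega
  · linarith [w3_le a1, w2_le a2, w1_le a3, w1_le a5, w1_le a6, w1_le a7, w1_le a8, w1_le a9]

lemma lemB (a0 a1 a2 a3 a5 a6 a7 a8 a9 : ℤ)
    (h1 : -10*a0 + 3*a1 + 2*a2 + a3 + a5 + a6 + a7 + a8 + a9 = 0)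
    (h2 : -5*a0^2 + (a1^2 + a2^2 + a3^2 + a5^2 + a6^2 + a7^2 + a8^2 + a9^2) = 5)
    (d1 : (5:ℤ) ∣ a1) (d2 : (5:ℤ) ∣ a2) (d3 : (5:ℤ) ∣ a3) (d5 : (5:ℤ) ∣ a5)
    (d6 : (5:ℤ) ∣ a6) (d7 : (5:ℤ) ∣ a7) (d8 : (5:ℤ) ∣ a8) (d9 : (5:ℤ) ∣ a9) : False := by
  obtain ⟨b1, hb1⟩ := d1
  obtain ⟨b2, hb2⟩ := d2
  obtain ⟨b3, hb3⟩ := d3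
  obtain ⟨b5, hb5⟩ := d5
  obtain ⟨b6, hb6⟩ := d6
  obtain ⟨b7, hb7⟩ := d7
  obtain ⟨b8, hb8⟩ := d8
  obtain ⟨b9, hb9⟩ := d9
  subst hb1 hb2 hb3 hb5 hb6 hb7 hb8 hb9
  ring_nf at h1 h2
  have hV : 3*b1 + 2*b2 + b3 + b5 + b6 + b7 + b8 + b9 = 2*a0 := by linarith
  have hSexpr : 5*(b1^2 + b2^2 + b3^2 + b5^2 + b6^2 + b7^2 + b8^2 + b9^2) = 1 + a0^2 := by linarith
  have lag : (3*b1 + 2*b2 + b3 + b5 + b6 + b7 + b8 + b9)^2 + ((3*b2 - 2*b1)^2 + (3*b3 - b1)^2 + (3*b5 - b1)^2 + (3*b6 - b1)^2 + (3*b7 - b1)^2 + (3*b8 - b1)^2 + (3*b9 - b1)^2 + (2*b3 - b2)^2 + (2*b5 - b2)^2 + (2*b6 - b2)^2 + (2*b7 - b2)^2 + (2*b8 - b2)^2 + (2*b9 - b2)^2 + (b5 - b3)^2 + (b6 - b3)^2 + (b7 - b3)^2 + (b8 - b3)^2 + (b9 - b3)^2 + (b6 - b5)^2 + (b7 - b5)^2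 + (b8 - b5)^2 + (b9 - b5)^2 + (b7 - b6)^2 + (b8 - b6)^2 + (b9 - b6)^2 + (b8 - b7)^2 + (b9 - b7)^2 + (b9 - b8)^2) = 19*(b1^2 + b2^2 + b3^2 + b5^2 + b6^2 + b7^2 + b8^2 + b9^2) := by ring
  rw [hV] at lag
  have hsq : (0:ℤ) ≤ (3*b2 - 2*b1)^2 + (3*b3 - b1)^2 + (3*b5 - b1)^2 + (3*b6 - b1)^2 + (3*b7 - b1)^2 + (3*b8 - b1)^2 + (3*b9 - b1)^2 + (2*b3 - b2)^2 + (2*b5 - b2)^2 + (2*b6 - b2)^2 + (2*b7 - b2)^2 + (2*b8 - b2)^2 + (2*b9 - b2)^2 + (b5 - b3)^2 + (b6 - b3)^2 + (b7 - b3)^2 + (b8 - b3)^2 + (b9 - b3)^2 + (b6 - b5)^2 + (b7 - b5)^2 + (b8 - b5)^2 + (b9 - b5)^2 + (b7 - b6)^2 + (b8 - b6)^2 + (b9 - b6)^2 + (b8 - b7)^2 + (b9 - b7)^2 + (b9 - b8)^2 := by positivity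
  have hsq5 : (0:ℤ) ≤ 5*((3*b2 - 2*b1)^2 + (3*b3 - b1)^2 + (3*b5 - b1)^2 + (3*b6 - b1)^2 + (3*b7 - b1)^2 + (3*b8 - b1)^2 + (3*b9 - b1)^2 + (2*b3 - b2)^2 + (2*b5 - b2)^2 + (2*b6 - b2)^2 + (2*b7 - b2)^2 + (2*b8 - b2)^2 + (2*b9 - b2)^2 + (b5 - b3)^2 + (b6 - b3)^2 + (b7 - b3)^2 + (b8 - b3)^2 + (b9 - b3)^2 + (b6 - b5)^2 + (b7 - b5)^2 + (b8 - b5)^2 + (b9 - b5)^2 + (b7 - b6)^2 + (b8 - b6)^2 + (b9 - b6)^2 + (b8 - b7)^2 + (b9 - b7)^2 + (b9 - b8)^2) := by positivity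
  have e1 : a0^2 = 19 - 5*((3*b2 - 2*b1)^2 + (3*b3 - b1)^2 + (3*b5 - b1)^2 + (3*b6 - b1)^2 + (3*b7 - b1)^2 + (3*b8 - b1)^2 + (3*b9 - b1)^2 + (2*b3 - b2)^2 + (2*b5 - b2)^2 + (2*b6 - b2)^2 + (2*b7 - b2)^2 + (2*b8 - b2)^2 + (2*b9 - b2)^2 + (b5 - b3)^2 + (b6 - b3)^2 + (b7 - b3)^2 + (b8 - b3)^2 + (b9 - b3)^2 + (b6 - b5)^2 + (b7 - b5)^2 + (b8 - b5)^2 + (b9 - b5)^2 + (b7 - b6)^2 + (b8 - b6)^2 + (b9 - b6)^2 + (b8 - b7)^2 + (b9 - b7)^2 + (b9 - b8)^2) := by linear_combination 5*lag + 19*hSexpr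
  have hbnd : a0^2 ≤ 19 := by rw [e1]; exact sub_le_self 19 hsq5
  clear lag hsq hsq5 e1
  have ep1 : (a0-4)*((a0-4)-1) = a0^2 - 9*a0 + 20 := by ring
  have hb1' : 9*a0 ≤ 39 := by linarith [intstep (a0-4), ep1]
  have ep2 : (a0+5)*((a0+5)-1) = a0^2 + 9*a0 + 20 := by ring
  have hb2' : -39 ≤ 9*a0 := by linarith [intstep (a0+5), ep2]
  clear ep1 ep2
  obtain ⟨S, hSd⟩ : ∃ S : ℤ, S = b1^2 + b2^2 + b3^2 + b5^2 + b6^2 + b7^2 + b8^2 + b9^2 := ⟨_, rfl⟩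
  have hS : 5*S = 1 + a0^2 := by rw [hSd]; linarith
  have hcase : a0 = -4 ∨ a0 = -3 ∨ a0 = -2 ∨ a0 = -1 ∨ a0 = 0 ∨ a0 = 1 ∨ a0 = 2 ∨ a0 = 3 ∨ a0 = 4 := by omega
  rcases hcase with h | h | h | h | h | h | h | h | h <;> subst h <;> norm_num at hS hV ⊢
  · omega
  · have hSS : b1^2 + b2^2 + b3^2 + b5^2 + b6^2 + b7^2 + b8^2 + b9^2 = 2 := by rw [← hSd]; omega
    linarith [w3_ge b1, w2_ge b2, w1_ge b3, w1_ge b5, w1_ge b6, w1_ge b7, w1_ge b8, w1_ge b9]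
  · have hSS : b1^2 + b2^2 + b3^2 + b5^2 + b6^2 + b7^2 + b8^2 + b9^2 = 1 := by rw [← hSd]; omega
    obtain ⟨k1, hk1⟩ := evensq b1
    obtain ⟨k2, hk2⟩ := evensq b2
    obtain ⟨k3, hk3⟩ := evensq b3
    obtain ⟨k5, hk5⟩ := evensq b5
    obtain ⟨k6, hk6⟩ := evensq b6
    obtain ⟨k7, hk7⟩ := evensq b7
    obtain ⟨k8, hk8⟩ := evensq b8
    obtain ⟨k9, hk9⟩ := evensq b9
    have hodd2 : b2 = 2*(k1+k2+k3+k5+k6+k7+k8+k9 - b1 - 3) + 1 := by linarith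
    have h2sq : 1 ≤ b2^2 := by
      rw [hodd2]
      have ep : (2*(k1+k2+k3+k5+k6+k7+k8+k9 - b1 - 3) + 1)^2 = 4*((k1+k2+k3+k5+k6+k7+k8+k9 - b1 - 3 + 1)*((k1+k2+k3+k5+k6+k7+k8+k9 - b1 - 3 + 1)-1)) + 1 := by ring
      linarith [intstep (k1+k2+k3+k5+k6+k7+k8+k9 - b1 - 3 + 1), ep]
    have s1 : b1^2 = 0 := le_antisymm (by linarith [sq_nonneg b3, sq_nonneg b5, sq_nonneg b6, sq_nonneg b7, sq_nonneg b8, sq_nonneg b9]) (sq_nonneg b1)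
    have s3 : b3^2 = 0 := le_antisymm (by linarith [sq_nonneg b1, sq_nonneg b5, sq_nonneg b6, sq_nonneg b7, sq_nonneg b8, sq_nonneg b9]) (sq_nonneg b3)
    have s5 : b5^2 = 0 := le_antisymm (by linarith [sq_nonneg b1, sq_nonneg b3, sq_nonneg b6, sq_nonneg b7, sq_nonneg b8, sq_nonneg b9]) (sq_nonneg b5)
    have s6 : b6^2 = 0 := le_antisymm (by linarith [sq_nonneg b1, sq_nonneg b3, sq_nonneg b5, sq_nonneg b7, sq_nonneg b8, sq_nonneg b9]) (sq_nonneg b6)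
    have s7 : b7^2 = 0 := le_antisymm (by linarith [sq_nonneg b1, sq_nonneg b3, sq_nonneg b5, sq_nonneg b6, sq_nonneg b8, sq_nonneg b9]) (sq_nonneg b7)
    have s8 : b8^2 = 0 := le_antisymm (by linarith [sq_nonneg b1, sq_nonneg b3, sq_nonneg b5, sq_nonneg b6, sq_nonneg b7, sq_nonneg b9]) (sq_nonneg b8)
    have s9 : b9^2 = 0 := le_antisymm (by linarith [sq_nonneg b1, sq_nonneg b3, sq_nonneg b5, sq_nonneg b6, sq_nonneg b7, sq_nonneg b8]) (sq_nonneg b9)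
    have z1 : b1 = 0 := pow_eq_zero_iff (two_ne_zero) |>.mp s1
    have z3 : b3 = 0 := pow_eq_zero_iff (two_ne_zero) |>.mp s3
    have z5 : b5 = 0 := pow_eq_zero_iff (two_ne_zero) |>.mp s5
    have z6 : b6 = 0 := pow_eq_zero_iff (two_ne_zero) |>.mp s6
    have z7 : b7 = 0 := pow_eq_zero_iff (two_ne_zero) |>.mp s7
    have z8 : b8 = 0 := pow_eq_zero_iff (two_ne_zero) |>.mp s8
    have z9 : b9 = 0 := pow_eq_zero_iff (two_ne_zero) |>.mp s9
    have hfin : 2*b2 = -4 := by linarith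
    omega
  · omega
  · omega
  · omega
  · have hSS : b1^2 + b2^2 + b3^2 + b5^2 + b6^2 + b7^2 + b8^2 + b9^2 = 1 := by rw [← hSd]; omega
    obtain ⟨k1, hk1⟩ := evensq b1
    obtain ⟨k2, hk2⟩ := evensq b2
    obtain ⟨k3, hk3⟩ := evensq b3
    obtain ⟨k5, hk5⟩ := evensq b5
    obtain ⟨k6, hk6⟩ := evensq b6
    obtain ⟨k7, hk7⟩ := evensq b7
    obtain ⟨k8, hk8⟩ := evensq b8
    obtain ⟨k9, hk9⟩ := evensq b9
    have hodd2 : b2 = 2*(k1+k2+k3+k5+k6+k7+k8+k9 - b1 + 1) + 1 := by linarith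
    have h2sq : 1 ≤ b2^2 := by
      rw [hodd2]
      have ep : (2*(k1+k2+k3+k5+k6+k7+k8+k9 - b1 + 1) + 1)^2 = 4*((k1+k2+k3+k5+k6+k7+k8+k9 - b1 + 1 + 1)*((k1+k2+k3+k5+k6+k7+k8+k9 - b1 + 1 + 1)-1)) + 1 := by ring
      linarith [intstep (k1+k2+k3+k5+k6+k7+k8+k9 - b1 + 1 + 1), ep]
    have s1 : b1^2 = 0 := le_antisymm (by linarith [sq_nonneg b3, sq_nonneg b5, sq_nonneg b6, sq_nonneg b7, sq_nonneg b8, sq_nonneg b9]) (sq_nonneg b1)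
    have s3 : b3^2 = 0 := le_antisymm (by linarith [sq_nonneg b1, sq_nonneg b5, sq_nonneg b6, sq_nonneg b7, sq_nonneg b8, sq_nonneg b9]) (sq_nonneg b3)
    have s5 : b5^2 = 0 := le_antisymm (by linarith [sq_nonneg b1, sq_nonneg b3, sq_nonneg b6, sq_nonneg b7, sq_nonneg b8, sq_nonneg b9]) (sq_nonneg b5)
    have s6 : b6^2 = 0 := le_antisymm (by linarith [sq_nonneg b1, sq_nonneg b3, sq_nonneg b5, sq_nonneg b7, sq_nonneg b8, sq_nonneg b9]) (sq_nonneg b6)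
    have s7 : b7^2 = 0 := le_antisymm (by linarith [sq_nonneg b1, sq_nonneg b3, sq_nonneg b5, sq_nonneg b6, sq_nonneg b8, sq_nonneg b9]) (sq_nonneg b7)
    have s8 : b8^2 = 0 := le_antisymm (by linarith [sq_nonneg b1, sq_nonneg b3, sq_nonneg b5, sq_nonneg b6, sq_nonneg b7, sq_nonneg b9]) (sq_nonneg b8)
    have s9 : b9^2 = 0 := le_antisymm (by linarith [sq_nonneg b1, sq_nonneg b3, sq_nonneg b5, sq_nonneg b6, sq_nonneg b7, sq_nonneg b8]) (sq_nonneg b9)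
    have z1 : b1 = 0 := pow_eq_zero_iff (two_ne_zero) |>.mp s1
    have z3 : b3 = 0 := pow_eq_zero_iff (two_ne_zero) |>.mp s3
    have z5 : b5 = 0 := pow_eq_zero_iff (two_ne_zero) |>.mp s5
    have z6 : b6 = 0 := pow_eq_zero_iff (two_ne_zero) |>.mp s6
    have z7 : b7 = 0 := pow_eq_zero_iff (two_ne_zero) |>.mp s7
    have z8 : b8 = 0 := pow_eq_zero_iff (two_ne_zero) |>.mp s8
    have z9 : b9 = 0 := pow_eq_zero_iff (two_ne_zero) |>.mp s9
    have hfin : 2*b2 = 4 := by linarith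
    omega
  · have hSS : b1^2 + b2^2 + b3^2 + b5^2 + b6^2 + b7^2 + b8^2 + b9^2 = 2 := by rw [← hSd]; omega
    linarith [w3_le b1, w2_le b2, w1_le b3, w1_le b5, w1_le b6, w1_le b7, w1_le b8, w1_le b9]
  · omega

lemma key (q x0 x1 x2 x3 x4 x5 x6 x7 x8 x9 : ℤ)
    (hcon : -10*x0 + 3*x1 + 2*x2 + x3 + x4 + x5 + x6 + x7 + x8 + x9 = 0)
    (hq : -5*x0^2 + (x1^2 + x2^2 + x3^2 + x4^2 + x5^2 + x6^2 + x7^2 + x8^2 + x9^2) = q)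
    (hqpos : 0 < q) (hodd : ¬ ((2:ℤ) ∣ q))
    (d0 : q ∣ -5*x0 + 10*x3) (d1 : q ∣ x1 - 3*x3) (d2 : q ∣ x2 - 2*x3)
    (d4 : q ∣ x4 - x3) (d5 : q ∣ x5 - x3) (d6 : q ∣ x6 - x3) (d7 : q ∣ x7 - x3)
    (d8 : q ∣ x8 - x3) (d9 : q ∣ x9 - x3) : False := by
  obtain ⟨c0, hc0⟩ := d0
  obtain ⟨c1, hc1⟩ := d1
  obtain ⟨c2, hc2⟩ := d2
  obtain ⟨c4, hc4⟩ := d4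
  obtain ⟨c5, hc5⟩ := d5
  obtain ⟨c6, hc6⟩ := d6
  obtain ⟨c7, hc7⟩ := d7
  obtain ⟨c8, hc8⟩ := d8
  obtain ⟨c9, hc9⟩ := d9
  have hconA : -10*(x0-2*x4) + 3*(x1-3*x4) + 2*(x2-2*x4) + (x3-x4) + (x5-x4) + (x6-x4) + (x7-x4) + (x8-x4) + (x9-x4) = 0 := by linarith
  have hqA : -5*(x0-2*x4)^2 + ((x1-3*x4)^2 + (x2-2*x4)^2 + (x3-x4)^2 + (x5-x4)^2 + (x6-x4)^2 + (x7-x4)^2 + (x8-x4)^2 + (x9-x4)^2) = q := by linear_combination hq - 2*x4*hcon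
  have ht0 : 5*(x0-2*x4) = q*(-c0-10*c4) := by linear_combination -hc0 - 10*hc4
  have ht1 : (x1-3*x4) = q*(c1-3*c4) := by linear_combination hc1 - 3*hc4
  have ht2 : (x2-2*x4) = q*(c2-2*c4) := by linear_combination hc2 - 2*hc4
  have ht3 : (x3-x4) = q*(-c4) := by linear_combination -hc4
  have ht5 : (x5-x4) = q*(c5-c4) := by linear_combination hc5 - hc4
  have ht6 : (x6-x4) = q*(c6-c4) := by linear_combination hc6 - hc4
  have ht7 : (x7-x4) = q*(c7-c4) := by linear_combination hc7 - hc4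
  have ht8 : (x8-x4) = q*(c8-c4) := by linear_combination hc8 - hc4
  have ht9 : (x9-x4) = q*(c9-c4) := by linear_combination hc9 - hc4
  have h25 : 25*q = q*(q*(-5*(-c0-10*c4)^2 + 25*((c1-3*c4)^2 + (c2-2*c4)^2 + (-c4)^2 + (c5-c4)^2 + (c6-c4)^2 + (c7-c4)^2 + (c8-c4)^2 + (c9-c4)^2))) := by
    linear_combination (-25)*hqA - 5*(5*(x0-2*x4)+q*(-c0-10*c4))*ht0 + 25*((x1-3*x4)+q*(c1-3*c4))*ht1 + 25*((x2-2*x4)+q*(c2-2*c4))*ht2 + 25*((x3-x4)+q*(-c4))*ht3 + 25*((x5-x4)+q*(c5-c4))*ht5 + 25*((x6-x4)+q*(c6-c4))*ht6 + 25*((x7-x4)+q*(c7-c4))*ht7 + 25*((x8-x4)+q*(c8-c4))*ht8 + 25*((x9-x4)+q*(c9-c4))*ht9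
  have hT : (25:ℤ) = q*(-5*(-c0-10*c4)^2 + 25*((c1-3*c4)^2 + (c2-2*c4)^2 + (-c4)^2 + (c5-c4)^2 + (c6-c4)^2 + (c7-c4)^2 + (c8-c4)^2 + (c9-c4)^2)) :=
    mul_left_cancel₀ (by omega : q ≠ 0) (by linear_combination h25)
  have hdvd : q ∣ 25 := ⟨_, hT⟩
  have hle : q ≤ 25 := Int.le_of_dvd (by norm_num) hdvd
  have hq3 : q = 1 ∨ q = 5 ∨ q = 25 := by interval_cases q <;> omega
  rcases hq3 with h | h | h <;> subst h
  · exact lemA (x0-2*x4) (x1-3*x4) (x2-2*x4) (x3-x4) (x5-x4) (x6-x4) (x7-x4) (x8-x4) (x9-x4) hconA hqA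
  · exact lemB (x0-2*x4) (x1-3*x4) (x2-2*x4) (x3-x4) (x5-x4) (x6-x4) (x7-x4) (x8-x4) (x9-x4) hconA hqA
      ⟨(c1-3*c4), ht1⟩ ⟨(c2-2*c4), ht2⟩ ⟨(-c4), ht3⟩ ⟨(c5-c4), ht5⟩ ⟨(c6-c4), ht6⟩ ⟨(c7-c4), ht7⟩ ⟨(c8-c4), ht8⟩ ⟨(c9-c4), ht9⟩
  · have ha0 : (x0-2*x4) = 5*(-c0-10*c4) := by linarith
    have goal25 : (25:ℤ)*(-5*(-c0-10*c4)^2 + ((5*(c1-3*c4))^2 + (5*(c2-2*c4))^2 + (5*(-c4))^2 + (5*(c5-c4))^2 + (5*(c6-c4))^2 + (5*(c7-c4))^2 + (5*(c8-c4))^2 + (5*(c9-c4))^2)) = 25*1 := by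
      linear_combination hqA + 5*((x0-2*x4)+5*(-c0-10*c4))*ha0 - ((x1-3*x4)+25*(c1-3*c4))*ht1 - ((x2-2*x4)+25*(c2-2*c4))*ht2 - ((x3-x4)+25*(-c4))*ht3 - ((x5-x4)+25*(c5-c4))*ht5 - ((x6-x4)+25*(c6-c4))*ht6 - ((x7-x4)+25*(c7-c4))*ht7 - ((x8-x4)+25*(c8-c4))*ht8 - ((x9-x4)+25*(c9-c4))*ht9
    have hq25 : -5*(-c0-10*c4)^2 + ((5*(c1-3*c4))^2 + (5*(c2-2*c4))^2 + (5*(-c4))^2 + (5*(c5-c4))^2 + (5*(c6-c4))^2 + (5*(c7-c4))^2 + (5*(c8-c4))^2 + (5*(c9-c4))^2) = 1 := mul_left_cancel₀ (by norm_num : (25:ℤ) ≠ 0) goal25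
    have hcon25 : -10*(-c0-10*c4) + 3*(5*(c1-3*c4)) + 2*(5*(c2-2*c4)) + (5*(-c4)) + (5*(c5-c4)) + (5*(c6-c4)) + (5*(c7-c4)) + (5*(c8-c4)) + (5*(c9-c4)) = 0 := by linarith
    exact lemA (-c0-10*c4) (5*(c1-3*c4)) (5*(c2-2*c4)) (5*(-c4)) (5*(c5-c4)) (5*(c6-c4)) (5*(c7-c4)) (5*(c8-c4)) (5*(c9-c4)) hcon25 hq25

lemma root_even (r : Fin 10 → ℤ) (hre : Bform 5 r eVec = 0) (hqpos : 0 < Qform 5 r)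
    (hd : ∀ x : Fin 10 → ℤ, Bform 5 x eVec = 0 → Qform 5 r ∣ 2 * Bform 5 r x) :
    (2:ℤ) ∣ Qform 5 r := by
  by_contra hodd
  rw [Bform_apply] at hre
  simp only [show eVec 0 = 2 from rfl,
    show eVec 1 = 3 from rfl,
    show eVec 2 = 2 from rfl,
    show eVec 3 = 1 from rfl,
    show eVec 4 = 1 from rfl,
    show eVec 5 = 1 from rfl,
    show eVec 6 = 1 from rfl,
    show eVec 7 = 1 from rfl,
    show eVec 8 = 1 from rfl,
    show eVec 9 = 1 from rfl] at hre
  have hcon : -10*(r 0) + 3*(r 1) + 2*(r 2) + (r 3) + (r 4) + (r 5) + (r 6) + (r 7) + (r 8) + (r 9) = 0 := by linarith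
  have hQB : Qform 5 r = Bform 5 r r := rfl
  have hBrr := Bform_apply r r
  have hq : -5*(r 0)^2 + ((r 1)^2 + (r 2)^2 + (r 3)^2 + (r 4)^2 + (r 5)^2 + (r 6)^2 + (r 7)^2 + (r 8)^2 + (r 9)^2) = Qform 5 r := by
    linear_combination -hQB - hBrr
  have d0 : Qform 5 r ∣ -5*(r 0) + 10*(r 3) := by
    obtain ⟨k, hk⟩ := odd_dvd hodd (hd (![1,0,0,10,0,0,0,0,0,0] : Fin 10 → ℤ) (by decide))
    rw [Bform_apply] at hk
    simp only [show ((![1,0,0,10,0,0,0,0,0,0] : Fin 10 → ℤ)) 0 = 1 from rfl, show ((![1,0,0,10,0,0,0,0,0,0] : Fin 10 → ℤ)) 1 = 0 from rfl, show ((![1,0,0,10,0,0,0,0,0,0] : Fin 10 → ℤ)) 2 = 0 from rfl, show ((![1,0,0,10,0,0,0,0,0,0] : Fin 10 → ℤ)) 3 = 10 from rfl, show ((![1,0,0,10,0,0,0,0,0,0] : Fin 10 → ℤ)) 4 = 0 from rfl, show ((![1,0,0,10,0,0,0,0,0,0] : Fin 10 → ℤ)) 5 = 0 from rfl, show ((![1,0,0,10,0,0,0,0,0,0]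 : Fin 10 → ℤ)) 6 = 0 from rfl, show ((![1,0,0,10,0,0,0,0,0,0] : Fin 10 → ℤ)) 7 = 0 from rfl, show ((![1,0,0,10,0,0,0,0,0,0] : Fin 10 → ℤ)) 8 = 0 from rfl, show ((![1,0,0,10,0,0,0,0,0,0] : Fin 10 → ℤ)) 9 = 0 from rfl] at hk
    exact ⟨k, by linear_combination hk⟩
  have d1 : Qform 5 r ∣ (r 1) - 3*(r 3) := by
    obtain ⟨k, hk⟩ := odd_dvd hodd (hd (![0,1,0,-3,0,0,0,0,0,0] : Fin 10 → ℤ) (by decide))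
    rw [Bform_apply] at hk
    simp only [show ((![0,1,0,-3,0,0,0,0,0,0] : Fin 10 → ℤ)) 0 = 0 from rfl, show ((![0,1,0,-3,0,0,0,0,0,0] : Fin 10 → ℤ)) 1 = 1 from rfl, show ((![0,1,0,-3,0,0,0,0,0,0] : Fin 10 → ℤ)) 2 = 0 from rfl, show ((![0,1,0,-3,0,0,0,0,0,0] : Fin 10 → ℤ)) 3 = -3 from rfl, show ((![0,1,0,-3,0,0,0,0,0,0] : Fin 10 → ℤ)) 4 = 0 from rfl, show ((![0,1,0,-3,0,0,0,0,0,0] : Fin 10 → ℤ)) 5 = 0 from rfl, show ((![0,1,0,-3,0,0,0,0,0,0] : Fin 10 → ℤ)) 6 = 0 from rfl, show ((![0,1,0,-3,0,0,0,0,0,0] : Fin 10 → ℤ)) 7 = 0 from rfl, show ((![0,1,0,-3,0,0,0,0,0,0] : Fin 10 → ℤ)) 8 = 0 from rfl, show ((![0,1,0,-3,0,0,0,0,0,0] : Fin 10 → ℤ)) 9 = 0 from rfl] at hk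
    exact ⟨k, by linear_combination hk⟩
  have d2 : Qform 5 r ∣ (r 2) - 2*(r 3) := by
    obtain ⟨k, hk⟩ := odd_dvd hodd (hd (![0,0,1,-2,0,0,0,0,0,0] : Fin 10 → ℤ) (by decide))
    rw [Bform_apply] at hk
    simp only [show ((![0,0,1,-2,0,0,0,0,0,0] : Fin 10 → ℤ)) 0 = 0 from rfl, show ((![0,0,1,-2,0,0,0,0,0,0] : Fin 10 → ℤ)) 1 = 0 from rfl, show ((![0,0,1,-2,0,0,0,0,0,0] : Fin 10 → ℤ)) 2 = 1 from rfl, show ((![0,0,1,-2,0,0,0,0,0,0] : Fin 10 → ℤ)) 3 = -2 from rfl, show ((![0,0,1,-2,0,0,0,0,0,0] : Fin 10 → ℤ)) 4 = 0 from rfl, show ((![0,0,1,-2,0,0,0,0,0,0] : Fin 10 → ℤ)) 5 = 0 from rfl, show ((![0,0,1,-2,0,0,0,0,0,0] : Fin 10 → ℤ)) 6 = 0 from rfl, show ((![0,0,1,-2,0,0,0,0,0,0] : Fin 10 → ℤ)) 7 = 0 from rfl, show ((![0,0,1,-2,0,0,0,0,0,0] : Fin 10 → ℤ)) 8 = 0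 from rfl, show ((![0,0,1,-2,0,0,0,0,0,0] : Fin 10 → ℤ)) 9 = 0 from rfl] at hk
    exact ⟨k, by linear_combination hk⟩
  have d4 : Qform 5 r ∣ (r 4) - (r 3) := by
    obtain ⟨k, hk⟩ := odd_dvd hodd (hd (![0,0,0,-1,1,0,0,0,0,0] : Fin 10 → ℤ) (by decide))
    rw [Bform_apply] at hk
    simp only [show ((![0,0,0,-1,1,0,0,0,0,0] : Fin 10 → ℤ)) 0 = 0 from rfl, show ((![0,0,0,-1,1,0,0,0,0,0] : Fin 10 → ℤ)) 1 = 0 from rfl, show ((![0,0,0,-1,1,0,0,0,0,0] : Fin 10 → ℤ)) 2 = 0 from rfl, show ((![0,0,0,-1,1,0,0,0,0,0] : Fin 10 → ℤ)) 3 = -1 from rfl, show ((![0,0,0,-1,1,0,0,0,0,0] : Fin 10 → ℤ)) 4 = 1 from rfl, show ((![0,0,0,-1,1,0,0,0,0,0] : Fin 10 → ℤ)) 5 = 0 from rfl, show ((![0,0,0,-1,1,0,0,0,0,0] : Fin 10 → ℤ)) 6 = 0 from rfl, show ((![0,0,0,-1,1,0,0,0,0,0] : Fin 10 → ℤ)) 7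 = 0 from rfl, show ((![0,0,0,-1,1,0,0,0,0,0] : Fin 10 → ℤ)) 8 = 0 from rfl, show ((![0,0,0,-1,1,0,0,0,0,0] : Fin 10 → ℤ)) 9 = 0 from rfl] at hk
    exact ⟨k, by linear_combination hk⟩
  have d5 : Qform 5 r ∣ (r 5) - (r 3) := by
    obtain ⟨k, hk⟩ := odd_dvd hodd (hd (![0,0,0,-1,0,1,0,0,0,0] : Fin 10 → ℤ) (by decide))
    rw [Bform_apply] at hk
    simp only [show ((![0,0,0,-1,0,1,0,0,0,0] : Fin 10 → ℤ)) 0 = 0 from rfl, show ((![0,0,0,-1,0,1,0,0,0,0] : Fin 10 → ℤ)) 1 = 0 from rfl, show ((![0,0,0,-1,0,1,0,0,0,0] : Fin 10 → ℤ)) 2 = 0 from rfl, show ((![0,0,0,-1,0,1,0,0,0,0] : Fin 10 → ℤ)) 3 = -1 from rfl, show ((![0,0,0,-1,0,1,0,0,0,0] : Fin 10 → ℤ)) 4 = 0 from rfl, show ((![0,0,0,-1,0,1,0,0,0,0] : Fin 10 → ℤ)) 5 = 1 from rfl, show ((![0,0,0,-1,0,1,0,0,0,0] : Fin 10 → ℤ))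 6 = 0 from rfl, show ((![0,0,0,-1,0,1,0,0,0,0] : Fin 10 → ℤ)) 7 = 0 from rfl, show ((![0,0,0,-1,0,1,0,0,0,0] : Fin 10 → ℤ)) 8 = 0 from rfl, show ((![0,0,0,-1,0,1,0,0,0,0] : Fin 10 → ℤ)) 9 = 0 from rfl] at hk
    exact ⟨k, by linear_combination hk⟩
  have d6 : Qform 5 r ∣ (r 6) - (r 3) := by
    obtain ⟨k, hk⟩ := odd_dvd hodd (hd (![0,0,0,-1,0,0,1,0,0,0] : Fin 10 → ℤ) (by decide))
    rw [Bform_apply] at hk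
    simp only [show ((![0,0,0,-1,0,0,1,0,0,0] : Fin 10 → ℤ)) 0 = 0 from rfl, show ((![0,0,0,-1,0,0,1,0,0,0] : Fin 10 → ℤ)) 1 = 0 from rfl, show ((![0,0,0,-1,0,0,1,0,0,0] : Fin 10 → ℤ)) 2 = 0 from rfl, show ((![0,0,0,-1,0,0,1,0,0,0] : Fin 10 → ℤ)) 3 = -1 from rfl, show ((![0,0,0,-1,0,0,1,0,0,0] : Fin 10 → ℤ)) 4 = 0 from rfl, show ((![0,0,0,-1,0,0,1,0,0,0] : Fin 10 → ℤ)) 5 = 0 from rfl, show ((![0,0,0,-1,0,0,1,0,0,0] : Fin 10 → ℤ)) 6 = 1 from rfl, show ((![0,0,0,-1,0,0,1,0,0,0] : Fin 10 → ℤ)) 7 = 0 from rfl, show ((![0,0,0,-1,0,0,1,0,0,0] : Fin 10 → ℤ)) 8 = 0 from rfl, show ((![0,0,0,-1,0,0,1,0,0,0] : Fin 10 → ℤ)) 9 = 0 from rfl] at hk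
    exact ⟨k, by linear_combination hk⟩
  have d7 : Qform 5 r ∣ (r 7) - (r 3) := by
    obtain ⟨k, hk⟩ := odd_dvd hodd (hd (![0,0,0,-1,0,0,0,1,0,0] : Fin 10 → ℤ) (by decide))
    rw [Bform_apply] at hk
    simp only [show ((![0,0,0,-1,0,0,0,1,0,0] : Fin 10 → ℤ)) 0 = 0 from rfl, show ((![0,0,0,-1,0,0,0,1,0,0] : Fin 10 → ℤ)) 1 = 0 from rfl, show ((![0,0,0,-1,0,0,0,1,0,0] : Fin 10 → ℤ)) 2 = 0 from rfl, show ((![0,0,0,-1,0,0,0,1,0,0] : Fin 10 → ℤ)) 3 = -1 from rfl, show ((![0,0,0,-1,0,0,0,1,0,0] : Fin 10 → ℤ)) 4 = 0 from rfl, show ((![0,0,0,-1,0,0,0,1,0,0] : Fin 10 → ℤ)) 5 = 0 from rfl, show ((![0,0,0,-1,0,0,0,1,0,0] : Fin 10 → ℤ)) 6 = 0 from rfl, show ((![0,0,0,-1,0,0,0,1,0,0] : Fin 10 → ℤ)) 7 = 1 from rfl, show ((![0,0,0,-1,0,0,0,1,0,0] : Fin 10 → ℤ)) 8 = 0 from rfl,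 show ((![0,0,0,-1,0,0,0,1,0,0] : Fin 10 → ℤ)) 9 = 0 from rfl] at hk
    exact ⟨k, by linear_combination hk⟩
  have d8 : Qform 5 r ∣ (r 8) - (r 3) := by
    obtain ⟨k, hk⟩ := odd_dvd hodd (hd (![0,0,0,-1,0,0,0,0,1,0] : Fin 10 → ℤ) (by decide))
    rw [Bform_apply] at hk
    simp only [show ((![0,0,0,-1,0,0,0,0,1,0] : Fin 10 → ℤ)) 0 = 0 from rfl, show ((![0,0,0,-1,0,0,0,0,1,0] : Fin 10 → ℤ)) 1 = 0 from rfl, show ((![0,0,0,-1,0,0,0,0,1,0] : Fin 10 → ℤ)) 2 = 0 from rfl, show ((![0,0,0,-1,0,0,0,0,1,0] : Fin 10 → ℤ)) 3 = -1 from rfl, show ((![0,0,0,-1,0,0,0,0,1,0] : Fin 10 → ℤ)) 4 = 0 from rfl, show ((![0,0,0,-1,0,0,0,0,1,0] : Fin 10 → ℤ)) 5 = 0 from rfl, show ((![0,0,0,-1,0,0,0,0,1,0] : Fin 10 → ℤ)) 6 = 0 from rfl, show ((![0,0,0,-1,0,0,0,0,1,0] : Fin 10 → ℤ)) 7 = 0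 from rfl, show ((![0,0,0,-1,0,0,0,0,1,0] : Fin 10 → ℤ)) 8 = 1 from rfl, show ((![0,0,0,-1,0,0,0,0,1,0] : Fin 10 → ℤ)) 9 = 0 from rfl] at hk
    exact ⟨k, by linear_combination hk⟩
  have d9 : Qform 5 r ∣ (r 9) - (r 3) := by
    obtain ⟨k, hk⟩ := odd_dvd hodd (hd (![0,0,0,-1,0,0,0,0,0,1] : Fin 10 → ℤ) (by decide))
    rw [Bform_apply] at hk
    simp only [show ((![0,0,0,-1,0,0,0,0,0,1] : Fin 10 → ℤ)) 0 = 0 from rfl, show ((![0,0,0,-1,0,0,0,0,0,1] : Fin 10 → ℤ)) 1 = 0 from rfl, show ((![0,0,0,-1,0,0,0,0,0,1] : Fin 10 → ℤ)) 2 = 0 from rfl, show ((![0,0,0,-1,0,0,0,0,0,1] : Fin 10 → ℤ)) 3 = -1 from rfl, show ((![0,0,0,-1,0,0,0,0,0,1] : Fin 10 → ℤ)) 4 = 0 from rfl, show ((![0,0,0,-1,0,0,0,0,0,1] : Fin 10 → ℤ)) 5 = 0 from rfl, show ((![0,0,0,-1,0,0,0,0,0,1] : Fin 10 → ℤ)) 6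 = 0 from rfl, show ((![0,0,0,-1,0,0,0,0,0,1] : Fin 10 → ℤ)) 7 = 0 from rfl, show ((![0,0,0,-1,0,0,0,0,0,1] : Fin 10 → ℤ)) 8 = 0 from rfl, show ((![0,0,0,-1,0,0,0,0,0,1] : Fin 10 → ℤ)) 9 = 1 from rfl] at hk
    exact ⟨k, by linear_combination hk⟩
  exact key (Qform 5 r) (r 0) (r 1) (r 2) (r 3) (r 4) (r 5) (r 6) (r 7) (r 8) (r 9)
    hcon hq hqpos hodd d0 d1 d2 d4 d5 d6 d7 d8 d9

def Mgrp : AddSubgroup (Fin 10 → ℤ) where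
  carrier := {x | Bform 5 x eVec = 0}
  add_mem' := by
    intro a b ha hb
    simp only [Set.mem_setOf_eq] at ha hb ⊢
    rw [Bform_apply] at ha hb ⊢
    simp only [Pi.add_apply]
    linear_combination ha + hb
  zero_mem' := by
    simp only [Set.mem_setOf_eq]
    rw [Bform_apply]
    simp
  neg_mem' := by
    intro a ha
    simp only [Set.mem_setOf_eq] at ha ⊢
    rw [Bform_apply] at ha ⊢
    simp only [Pi.neg_apply]
    linear_combination -ha

def qhom : (Fin 10 → ℤ) →+ ZMod 2 where
  toFun x := ((Qform 5 x : ℤ) : ZMod 2)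
  map_zero' := by
    show ((Qform 5 (0 : Fin 10 → ℤ) : ℤ) : ZMod 2) = 0
    have h0 : Qform 5 (0 : Fin 10 → ℤ) = 0 := by
      rw [Qform, Bform_apply]; simp
    rw [h0]
    simp
  map_add' := by
    intro x y
    show ((Qform 5 (x + y) : ℤ) : ZMod 2) = ((Qform 5 x : ℤ) : ZMod 2) + ((Qform 5 y : ℤ) : ZMod 2)
    have h : Qform 5 (x + y) = Qform 5 x + Qform 5 y + 2 * Bform 5 x y := by
      simp only [Qform, Bform_apply, Pi.add_apply]
      ring
    rw [h]
    push_cast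
    have h2 : (2 : ZMod 2) = 0 := rfl
    rw [h2]
    ring

theorem stmt12 :
    Qform 5 eVec = 0 ∧
    ((AddSubgroup.closure (insert eVec
        {r : Fin 10 → ℤ | Bform 5 r eVec = 0 ∧ 0 < Qform 5 r ∧
          ∀ x : Fin 10 → ℤ, Bform 5 x eVec = 0 → Qform 5 r ∣ 2 * Bform 5 r x}) :
        Set (Fin 10 → ℤ)) ⊂ {x : Fin 10 → ℤ | Bform 5 x eVec = 0}) := by
  constructor
  · decide
  · rw [Set.ssubset_def]
    constructor
    · intro x hx
      have hle : AddSubgroup.closure (insert eVec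
          {r : Fin 10 → ℤ | Bform 5 r eVec = 0 ∧ 0 < Qform 5 r ∧
            ∀ x : Fin 10 → ℤ, Bform 5 x eVec = 0 → Qform 5 r ∣ 2 * Bform 5 r x}) ≤ Mgrp := by
        rw [AddSubgroup.closure_le]
        intro z hz
        rw [Set.mem_insert_iff] at hz
        rcases hz with rfl | hz
        · show Bform 5 eVec eVec = 0
          decide
        · exact hz.1
      exact hle hx
    · intro hcon2
      have hv : (![1,2,2,0,0,0,0,0,0,0] : Fin 10 → ℤ) ∈ (AddSubgroup.closure (insert eVec
          {r : Fin 10 → ℤ | Bform 5 r eVec = 0 ∧ 0 < Qform 5 r ∧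
            ∀ x : Fin 10 → ℤ, Bform 5 x eVec = 0 → Qform 5 r ∣ 2 * Bform 5 r x}) :
          Set (Fin 10 → ℤ)) :=
        hcon2 (show Bform 5 (![1,2,2,0,0,0,0,0,0,0] : Fin 10 → ℤ) eVec = 0 by decide)
      have hle : AddSubgroup.closure (insert eVec
          {r : Fin 10 → ℤ | Bform 5 r eVec = 0 ∧ 0 < Qform 5 r ∧
            ∀ x : Fin 10 → ℤ, Bform 5 x eVec = 0 → Qform 5 r ∣ 2 * Bform 5 r x}) ≤ qhom.ker := by
        rw [AddSubgroup.closure_le]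
        intro z hz
        rw [Set.mem_insert_iff] at hz
        rw [SetLike.mem_coe, AddMonoidHom.mem_ker]
        rcases hz with rfl | hz
        · show ((Qform 5 eVec : ℤ) : ZMod 2) = 0
          rw [show Qform 5 eVec = 0 from by decide]
          simp
        · show ((Qform 5 z : ℤ) : ZMod 2) = 0
          rw [ZMod.intCast_zmod_eq_zero_iff_dvd]
          exact_mod_cast root_even z hz.1 hz.2.1 hz.2.2
      have h0 : qhom (![1,2,2,0,0,0,0,0,0,0] : Fin 10 → ℤ) = 0 := hle hv
      have h0' : ((Qform 5 (![1,2,2,0,0,0,0,0,0,0] : Fin 10 → ℤ) : ℤ) : ZMod 2) = 0 := h0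
      have h2 : ((2:ℕ):ℤ) ∣ Qform 5 (![1,2,2,0,0,0,0,0,0,0] : Fin 10 → ℤ) :=
        (ZMod.intCast_zmod_eq_zero_iff_dvd _ 2).mp h0'
      rw [show Qform 5 (![1,2,2,0,0,0,0,0,0,0] : Fin 10 → ℤ) = 3 from by decide] at h2
      omega
end

section
/- Let G = diag(−23, 1, 1, 1) as a 4×4 integer matrix. There exists a 4×4 integer matrix A such that Aᵀ·G·A = G, A·(0,−1,1,0) = (12,55,17,0), A·(2,7,6,3) = (6,27,10,1), A·(4,12,12,9) = (0,0,0,−1), A·(45,138,138,92) = (91,414,138,0), and A has infinite order, i.e., A^k is not the identity matrix for every integer k ≥ 1. -/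
/-- The Gram matrix `G = diag(-23, 1, 1, 1)`. -/
def Gmat : Matrix (Fin 4) (Fin 4) ℤ := Matrix.diagonal ![-23, 1, 1, 1]

/-!
The columns `u = (3, 14, 4, 0)` and `w = (4, 18, 6, 1)` of `invariantPlaneBasis` span a plane
invariant under `A = lorentzMat`, on which `G` restricts to `5x² - 7y²` and `A` acts by the automorph
`B = [[71, 84], [60, 71]]` of that binary form. Every power `Bᵏ` with `k ≥ 1` has positive
entries, so the last coordinate of `Aᵏ u = (Bᵏ)₀₀ u + (Bᵏ)₁₀ w` is positive, whereas that of `u`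
is `0`; hence `Aᵏ ≠ 1`.
-/

namespace Matrix

variable {m n R : Type*} [Fintype m] [DecidableEq m] [Fintype n] [DecidableEq n]

theorem pow_mul_eq_mul_pow_of_mul_eq [Semiring R] {A : Matrix m m R} {P : Matrix m n R}
    {B : Matrix n n R} (h : A * P = P * B) (k : ℕ) : A ^ k * P = P * B ^ k := by
  induction k with
  | zero => simp
  | succ k ih =>
    rw [pow_succ, Matrix.mul_assoc, h, ← Matrix.mul_assoc, ih, Matrix.mul_assoc, ← pow_succ]

variable [Semiring R] [PartialOrder R] [IsStrictOrderedRing R]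

theorem pow_apply_pos [Nonempty n] {B : Matrix n n R} (hB : ∀ i j, 0 < B i j) {k : ℕ}
    (hk : k ≠ 0) (i j : n) : 0 < (B ^ k) i j := by
  induction k generalizing i j with
  | zero => exact absurd rfl hk
  | succ k ih =>
    rcases eq_or_ne k 0 with rfl | hk
    · simpa using hB i j
    · rw [pow_succ, mul_apply]
      exact Finset.sum_pos (fun l _ => mul_pos (ih hk i l) (hB l j)) Finset.univ_nonempty

theorem pow_ne_one_of_mul_eq_mul_of_pos {A : Matrix m m R} {P : Matrix m n R}
    {B : Matrix n n R} (hAP : A * P = P * B) (hB : ∀ i j, 0 < B i j) {r : m} (hr : 0 ≤ P r)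
    {i₀ j₀ : n} (hi₀ : 0 < P r i₀) (hj₀ : P r j₀ = 0) {k : ℕ} (hk : k ≠ 0) : A ^ k ≠ 1 := by
  intro hA
  have : Nonempty n := ⟨i₀⟩
  have hfix : P r j₀ = (P * B ^ k) r j₀ := by
    rw [← pow_mul_eq_mul_pow_of_mul_eq hAP, hA, Matrix.one_mul]
  have hpos : 0 < (P * B ^ k) r j₀ := by
    rw [mul_apply]
    exact Finset.sum_pos' (fun i _ => mul_nonneg (hr i) (pow_apply_pos hB hk i j₀).le)
      ⟨i₀, Finset.mem_univ _, mul_pos hi₀ (pow_apply_pos hB hk i₀ j₀)⟩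
  rw [← hfix, hj₀] at hpos
  exact hpos.false

end Matrix

def lorentzMat : Matrix (Fin 4) (Fin 4) ℤ :=
  !![783, -108, -96, -76; 3588, -495, -440, -348; 1104, -152, -135, -108; 92, -12, -12, -9]

def invariantPlaneBasis : Matrix (Fin 4) (Fin 2) ℤ := !![3, 4; 14, 18; 4, 6; 0, 1]

def invariantPlaneAction : Matrix (Fin 2) (Fin 2) ℤ := !![71, 84; 60, 71]

theorem lorentzMat_mul_invariantPlaneBasis :
    lorentzMat * invariantPlaneBasis = invariantPlaneBasis * invariantPlaneAction := by
  decide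

theorem lorentzMat_pow_ne_one {k : ℕ} (hk : k ≠ 0) : lorentzMat ^ k ≠ 1 :=
  Matrix.pow_ne_one_of_mul_eq_mul_of_pos lorentzMat_mul_invariantPlaneBasis
    (fun i j => by fin_cases i <;> fin_cases j <;> decide) (r := 3)
    (fun i => by fin_cases i <;> decide) (i₀ := 1) (by decide) (j₀ := 0) (by decide) hk

theorem stmt19 :
    ∃ A : Matrix (Fin 4) (Fin 4) ℤ,
      A.transpose * Gmat * A = Gmat ∧
      A.mulVec ![0, -1, 1, 0] = ![12, 55, 17, 0] ∧
      A.mulVec ![2, 7, 6, 3] = ![6, 27, 10, 1] ∧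
      A.mulVec ![4, 12, 12, 9] = ![0, 0, 0, -1] ∧
      A.mulVec ![45, 138, 138, 92] = ![91, 414, 138, 0] ∧
      ∀ k : ℕ, 1 ≤ k → A ^ k ≠ 1 :=
  ⟨lorentzMat, by decide, by decide, by decide, by decide, by decide,
    fun _ hk => lorentzMat_pow_ne_one (Nat.one_le_iff_ne_zero.mp hk)⟩
end
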